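/- arXiv:1602.05058 — 2 statements merged into one kernel-verified Lean document; each statement's English description precedes it below -/
import Mathlib

section
/- Let z0 ∈ D \ ℝ and x ∈ (0,1). Then the point z0·(z0 − x)/(x·z0 − 1) belongs to V_{ℛ^≥}(z0) but not to V_𝒯(z0); in particular V_𝒯(z0) is a proper subset of V_{ℛ^≥}(z0). -/
open Complex Set Filter Topology

noncomputable section

/-- The open unit disc. -/
def uDisc : Set ℂ := {z : ℂ | ‖z‖ < 1}

/-- The holomorphic branch of the square root with `√1 = 1` (principal branch). -/
def csqrt (z : ℂ) : ℂ := z ^ (1/2 : ℂ)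

/-- `f` has only real Taylor coefficients at `0`, expressed by the symmetry
`f(conj z) = conj (f z)` on the unit disc. -/
def RealCoeffs (f : ℂ → ℂ) : Prop :=
  ∀ z ∈ uDisc, f ((starRingEnd ℂ) z) = (starRingEnd ℂ) (f z)

/-- The class `𝒰` of univalent self-maps of the unit disc with `f(0) = 0`,
`f'(0) > 0` and real Taylor coefficients. -/
def ClassU (f : ℂ → ℂ) : Prop :=
  DifferentiableOn ℂ f uDisc ∧ InjOn f uDisc ∧ MapsTo f uDisc uDisc ∧
    f 0 = 0 ∧ 0 < (deriv f 0).re ∧ (deriv f 0).im = 0 ∧ RealCoeffs f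

/-- The value range `V_𝒰(z0)`. -/
def VU (z0 : ℂ) : Set ℂ := {w : ℂ | ∃ f : ℂ → ℂ, ClassU f ∧ f z0 = w}

/-- The class `ℛ` of holomorphic self-maps of the unit disc fixing `0`
whose Taylor coefficients at `0` are all real. -/
def ClassR (f : ℂ → ℂ) : Prop :=
  DifferentiableOn ℂ f uDisc ∧ MapsTo f uDisc uDisc ∧ f 0 = 0 ∧ RealCoeffs f

/-- The class `ℛ^≥` of maps in `ℛ` with `f'(0) ≥ 0`. -/
def ClassRge (f : ℂ → ℂ) : Prop :=
  ClassR f ∧ 0 ≤ (deriv f 0).re ∧ (deriv f 0).im = 0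

/-- The value range `V_{ℛ^≥}(z0)`. -/
def VRge (z0 : ℂ) : Set ℂ := {w : ℂ | ∃ f : ℂ → ℂ, ClassRge f ∧ f z0 = w}

/-- The circular arc `C` bounding `V_{ℛ^≥}(z0)`. -/
def arcC (z0 : ℂ) : Set ℂ :=
  (fun x : ℝ => z0^2 * (z0 + 2*(x:ℂ) - 1) / (1 + 2*(x:ℂ)*z0 - z0)) '' Icc 0 1

/-- The class `𝒯` of typically real holomorphic self-maps of the unit disc
with `f(0) = 0` and `f'(0) > 0`. -/
def ClassT (f : ℂ → ℂ) : Prop :=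
  DifferentiableOn ℂ f uDisc ∧ MapsTo f uDisc uDisc ∧ f 0 = 0 ∧
    0 < (deriv f 0).re ∧ (deriv f 0).im = 0 ∧
    ∀ z ∈ uDisc, 0 ≤ (f z).im * z.im

/-- The value range `V_𝒯(z0)`. -/
def VT (z0 : ℂ) : Set ℂ := {w : ℂ | ∃ f : ℂ → ℂ, ClassT f ∧ f z0 = w}

/-!
The map `f(z) = z (z - x) / (x z - 1) = z ψ(z)`, with `ψ` the disc involution exchanging `x`
and `0`, lies in `ℛ^≥` but is not typically real.

Suppose `g ∈ 𝒯` and `g(z₀) = f(z₀)`. Typically real maps are real on the real axis, hence have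
real coefficients by the identity theorem. Since `|g(z₀)| < |z₀|`, the Schwarz lemma makes
`φ(z) = g(z)/z` a self-map of the disc, and `φ = ψ` at `z₀` and, by symmetry, at `conj z₀ ≠ z₀`.
So `ψ ∘ φ` is a self-map of the disc with two fixed points, hence the identity (Schwarz–Pick),
so `g = f`, which is not typically real.
-/

open Metric Function ComplexConjugate

lemma uDisc_eq_ball : uDisc = ball (0 : ℂ) 1 := by
  ext z; simp [uDisc]

lemma isOpen_uDisc : IsOpen uDisc := uDisc_eq_ball ▸ isOpen_ball

lemma zero_mem_uDisc : (0 : ℂ) ∈ uDisc := by simp [uDisc]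

lemma mem_uDisc_iff_normSq_lt_one {z : ℂ} : z ∈ uDisc ↔ normSq z < 1 := by
  rw [← Complex.sq_norm, sq_lt_one_iff₀ (norm_nonneg z)]; rfl

lemma ofReal_mem_uDisc_iff {x : ℝ} : (x : ℂ) ∈ uDisc ↔ |x| < 1 := by
  simp [uDisc]

lemma conj_mem_uDisc {z : ℂ} (hz : z ∈ uDisc) : conj z ∈ uDisc := by
  simpa [uDisc] using hz

def discInvolution (a z : ℂ) : ℂ := (a - z) / (1 - conj a * z)

lemma normSq_one_sub_conj_mul_sub_normSq_sub (a z : ℂ) :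
    normSq (1 - conj a * z) - normSq (a - z) = (1 - normSq a) * (1 - normSq z) := by
  simp only [normSq_apply, sub_re, sub_im, mul_re, mul_im, conj_re, conj_im, one_re, one_im]
  ring

lemma one_sub_conj_mul_ne_zero {a z : ℂ} (ha : a ∈ uDisc) (hz : z ∈ uDisc) :
    1 - conj a * z ≠ 0 := by
  intro h
  have key := normSq_one_sub_conj_mul_sub_normSq_sub a z
  rw [h, map_zero] at key
  rw [mem_uDisc_iff_normSq_lt_one] at ha hz
  nlinarith [normSq_nonneg (a - z)]

section discInvolution

variable {a z : ℂ}

lemma discInvolution_mem (ha : a ∈ uDisc) (hz : z ∈ uDisc) : discInvolution a z ∈ uDisc := by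
  have hpos : 0 < normSq (1 - conj a * z) := normSq_pos.2 (one_sub_conj_mul_ne_zero ha hz)
  have key := normSq_one_sub_conj_mul_sub_normSq_sub a z
  rw [mem_uDisc_iff_normSq_lt_one] at ha hz ⊢
  rw [discInvolution, normSq_div, div_lt_one hpos]
  nlinarith

lemma mapsTo_discInvolution (ha : a ∈ uDisc) : MapsTo (discInvolution a) uDisc uDisc :=
  fun _ hz ↦ discInvolution_mem ha hz

@[simp] lemma discInvolution_self (a : ℂ) : discInvolution a a = 0 := by
  simp [discInvolution]

@[simp] lemma discInvolution_zero (a : ℂ) : discInvolution a 0 = a := by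
  simp [discInvolution]

lemma discInvolution_discInvolution (ha : a ∈ uDisc) (hz : z ∈ uDisc) :
    discInvolution a (discInvolution a z) = z := by
  have hd := one_sub_conj_mul_ne_zero ha hz
  have haa : 1 - conj a * a ≠ 0 := one_sub_conj_mul_ne_zero ha ha
  have hnum : a - (a - z) / (1 - conj a * z) = z * (1 - conj a * a) / (1 - conj a * z) := by
    rw [eq_div_iff hd, sub_mul, div_mul_cancel₀ _ hd]; ring
  have hden : 1 - conj a * ((a - z) / (1 - conj a * z)) = (1 - conj a * a) / (1 - conj a * z) := by
    rw [eq_div_iff hd, sub_mul, mul_assoc, div_mul_cancel₀ _ hd]; ring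
  rw [discInvolution, discInvolution, hnum, hden, div_div_div_cancel_right₀ hd,
    mul_div_cancel_right₀ _ haa]

lemma differentiableOn_discInvolution (ha : a ∈ uDisc) :
    DifferentiableOn ℂ (discInvolution a) uDisc :=
  .div (by fun_prop) (by fun_prop) fun _ hz ↦ one_sub_conj_mul_ne_zero ha hz

lemma discInvolution_ofReal_conj (x : ℝ) (z : ℂ) :
    discInvolution x (conj z) = conj (discInvolution x z) := by
  simp [discInvolution]

end discInvolution

lemma eqOn_id_of_isFixedPt_zero {F : ℂ → ℂ} (hd : DifferentiableOn ℂ F uDisc)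
    (hm : MapsTo F uDisc uDisc) (h0 : IsFixedPt F 0) {a : ℂ} (ha : a ∈ uDisc) (ha0 : a ≠ 0)
    (hFa : IsFixedPt F a) : EqOn F id uDisc := by
  rw [uDisc_eq_ball] at hd hm ha ⊢
  have hmaps : MapsTo F (ball 0 1) (closedBall (F 0) 1) := by
    rw [h0.eq]; exact hm.mono_right ball_subset_closedBall
  have hslope : dslope F 0 a = 1 := by
    rw [dslope_of_ne _ ha0, slope_def_field, h0.eq, hFa.eq, sub_zero, div_self ha0]
  intro z hz
  simpa [h0.eq, hslope] using
    affine_of_mapsTo_ball_of_norm_dslope_eq_div hd hmaps ha (by simp [hslope]) hz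

lemma eqOn_id_of_isFixedPt_of_isFixedPt {F : ℂ → ℂ} (hd : DifferentiableOn ℂ F uDisc)
    (hm : MapsTo F uDisc uDisc) {a c : ℂ} (ha : a ∈ uDisc) (hc : c ∈ uDisc) (hac : a ≠ c)
    (hFa : IsFixedPt F a) (hFc : IsFixedPt F c) : EqOn F id uDisc := by
  have hψc : discInvolution a c ≠ 0 := fun h ↦ hac <| by
    rw [← discInvolution_discInvolution ha hc, h, discInvolution_zero]
  have hconj : EqOn (discInvolution a ∘ F ∘ discInvolution a) id uDisc := by
    refine eqOn_id_of_isFixedPt_zero ?_ ?_ ?_ (discInvolution_mem ha hc) hψc ?_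
    · exact (differentiableOn_discInvolution ha).comp
        (hd.comp (differentiableOn_discInvolution ha) (mapsTo_discInvolution ha))
        (hm.comp (mapsTo_discInvolution ha))
    · exact (mapsTo_discInvolution ha).comp (hm.comp (mapsTo_discInvolution ha))
    · simp [IsFixedPt, hFa.eq]
    · simp [IsFixedPt, discInvolution_discInvolution ha hc, hFc.eq]
  intro z hz
  have hψ : discInvolution a (F z) = discInvolution a z := by
    simpa [discInvolution_discInvolution ha hz] using hconj (discInvolution_mem ha hz)
  rw [id, ← discInvolution_discInvolution ha (hm hz), hψ, discInvolution_discInvolution ha hz]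

lemma dslope_zero_eq_div {g : ℂ → ℂ} (h0 : g 0 = 0) {z : ℂ} (hz : z ≠ 0) :
    dslope g 0 z = g z / z := by
  rw [dslope_of_ne _ hz, slope_def_field, h0, sub_zero, sub_zero]

lemma mapsTo_dslope_zero_of_norm_lt {g : ℂ → ℂ} (hd : DifferentiableOn ℂ g uDisc)
    (hm : MapsTo g uDisc uDisc) (h0 : g 0 = 0) {z₀ : ℂ} (hz₀ : z₀ ∈ uDisc)
    (hlt : ‖g z₀‖ < ‖z₀‖) : MapsTo (dslope g 0) uDisc uDisc := by
  rw [uDisc_eq_ball] at hd hm hz₀ ⊢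
  have hmaps : MapsTo g (ball 0 1) (closedBall (g 0) 1) := by
    rw [h0]; exact hm.mono_right ball_subset_closedBall
  intro z hz
  have hle : ‖dslope g 0 z‖ ≤ 1 := by
    simpa using norm_dslope_le_div_of_mapsTo_ball hd hmaps hz
  refine mem_ball_zero_iff.2 (hle.lt_of_ne fun heq ↦ hlt.ne ?_)
  rw [affine_of_mapsTo_ball_of_norm_dslope_eq_div hd hmaps hz (by simpa using heq) hz₀]
  simp [h0, heq]

lemma eq_zero_of_continuousAt_of_mul_nonneg {h : ℝ → ℝ} (hc : ContinuousAt h 0)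
    (hs : ∀ᶠ ε in 𝓝 0, 0 ≤ h ε * ε) : h 0 = 0 := by
  apply le_antisymm
  · refine le_of_tendsto (hc.tendsto.mono_left nhdsWithin_le_nhds : Tendsto h (𝓝[<] 0) _) ?_
    filter_upwards [nhdsWithin_le_nhds hs, self_mem_nhdsWithin] with ε hε hneg
    exact nonpos_of_mul_nonneg_left hε hneg
  · refine ge_of_tendsto (hc.tendsto.mono_left nhdsWithin_le_nhds : Tendsto h (𝓝[>] 0) _) ?_
    filter_upwards [nhdsWithin_le_nhds hs, self_mem_nhdsWithin] with ε hε hpos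
    exact nonneg_of_mul_nonneg_left hε hpos

lemma im_eq_zero_of_eventually_im_mul_im_nonneg {g : ℂ → ℂ} {t : ℝ}
    (hc : ContinuousAt g t) (ht : ∀ᶠ z in 𝓝 (t : ℂ), 0 ≤ (g z).im * z.im) : (g t).im = 0 := by
  have hline : Tendsto (fun ε : ℝ ↦ (t : ℂ) + ε * I) (𝓝 0) (𝓝 t) := by
    have : Continuous (fun ε : ℝ ↦ (t : ℂ) + ε * I) := by fun_prop
    simpa using this.tendsto 0
  have hcont : ContinuousAt (fun ε : ℝ ↦ (g (t + ε * I)).im) 0 := by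
    simpa [ContinuousAt, Function.comp_def] using
      (continuous_im.tendsto _).comp (hc.tendsto.comp hline)
  simpa using eq_zero_of_continuousAt_of_mul_nonneg hcont (by simpa using hline.eventually ht)

lemma realCoeffs_of_im_mul_im_nonneg {g : ℂ → ℂ} (hd : DifferentiableOn ℂ g uDisc)
    (ht : ∀ z ∈ uDisc, 0 ≤ (g z).im * z.im) : RealCoeffs g := by
  have hreal : ∀ t : ℝ, (t : ℂ) ∈ uDisc → conj (g t) = g t := fun t h ↦
    conj_eq_iff_im.2 <| im_eq_zero_of_eventually_im_mul_im_nonneg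
      (hd.continuousOn.continuousAt (isOpen_uDisc.mem_nhds h))
      (eventually_of_mem (isOpen_uDisc.mem_nhds h) ht)
  have hG : DifferentiableOn ℂ (conj ∘ g ∘ conj) uDisc := fun z hz ↦
    (differentiableAt_conj_conj_iff.2 (hd.differentiableAt
      (isOpen_uDisc.mem_nhds (conj_mem_uDisc hz)))).differentiableWithinAt
  have hfreq : ∃ᶠ z in 𝓝[≠] 0, g z = (conj ∘ g ∘ conj) z := by
    have hof : Tendsto ((↑) : ℝ → ℂ) (𝓝[≠] 0) (𝓝[≠] 0) :=
      continuous_ofReal.continuousWithinAt.tendsto_nhdsWithin fun _ _ ↦ by simp_all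
    refine hof.frequently (Eventually.frequently ?_)
    filter_upwards [nhdsWithin_le_nhds ((continuous_ofReal.tendsto 0).eventually
      (isOpen_uDisc.mem_nhds (by simpa using zero_mem_uDisc)))] with t ht
    simp [hreal t ht]
  have heq := (hd.analyticOnNhd isOpen_uDisc).eqOn_of_preconnected_of_frequently_eq
    (hG.analyticOnNhd isOpen_uDisc) (uDisc_eq_ball ▸ (convex_ball _ _).isPreconnected)
    zero_mem_uDisc hfreq
  intro z hz
  simpa using heq (conj_mem_uDisc hz)

lemma ClassT.classRge {f : ℂ → ℂ} (hf : ClassT f) : ClassRge f :=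
  let ⟨hd, hm, h0, hre, him, ht⟩ := hf
  ⟨⟨hd, hm, h0, realCoeffs_of_im_mul_im_nonneg hd ht⟩, hre.le, him⟩

def extremal (x : ℝ) (z : ℂ) : ℂ := z * discInvolution x z

lemma extremal_apply (x : ℝ) (z : ℂ) : extremal x z = z * (z - x) / (x * z - 1) := by
  rw [extremal, discInvolution, conj_ofReal, mul_div_assoc, ← neg_div_neg_eq, neg_sub, neg_sub]

section extremal

variable {x : ℝ}

lemma extremal_classRge (hx : (x : ℂ) ∈ uDisc) (hx0 : 0 ≤ x) : ClassRge (extremal x) := by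
  have hd := differentiableOn_discInvolution hx
  have hderiv : HasDerivAt (extremal x) x 0 := by
    have h := (hasDerivAt_id' (0 : ℂ)).fun_mul
      (hd.differentiableAt (isOpen_uDisc.mem_nhds zero_mem_uDisc)).hasDerivAt
    rwa [one_mul, zero_mul, add_zero, discInvolution_zero] at h
  refine ⟨⟨differentiableOn_id.mul hd, fun z hz ↦ ?_, by simp [extremal], fun z _ ↦ ?_⟩, ?_, ?_⟩
  · have hψ := discInvolution_mem hx hz
    rw [mem_uDisc_iff_normSq_lt_one] at hz hψ ⊢
    rw [extremal, normSq_mul]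
    nlinarith [normSq_nonneg z, normSq_nonneg (discInvolution x z)]
  · simp [extremal, discInvolution_ofReal_conj]
  · simp [hderiv.deriv, hx0]
  · simp [hderiv.deriv]

/-- `z = (1 + x)/2 + i (1 - x)/4` lies just above the segment `(x, 1)`, where the extremal
function is real and decreasing, so its image lies below the real axis. -/
lemma exists_im_extremal_mul_im_neg (hx : (x : ℂ) ∈ uDisc) :
    ∃ z ∈ uDisc, (extremal x z).im * z.im < 0 := by
  obtain ⟨hx₁, hx₂⟩ := abs_lt.1 (ofReal_mem_uDisc_iff.1 hx)
  set z : ℂ := ⟨(1 + x) / 2, (1 - x) / 4⟩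
  have hz : z ∈ uDisc := by
    rw [mem_uDisc_iff_normSq_lt_one, normSq_apply]; dsimp only [z]; nlinarith
  have hd : 0 < normSq (x * z - 1) := by
    have := one_sub_conj_mul_ne_zero hx hz
    rw [conj_ofReal] at this
    exact normSq_pos.2 fun h ↦ this (by linear_combination -h)
  refine ⟨z, hz, ?_⟩
  have hnum : ((z * (z - x)).im * (x * z - 1).re - (z * (z - x)).re * (x * z - 1).im) * z.im
      = (1 - x) ^ 2 * (5 * x ^ 3 + 6 * x ^ 2 + 5 * x - 16) / 256 := by
    simp only [z, mul_re, mul_im, sub_re, sub_im, ofReal_re, ofReal_im, one_re, one_im]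
    ring
  have hcubic : 5 * x ^ 3 + 6 * x ^ 2 + 5 * x - 16 < 0 := by nlinarith
  rw [extremal_apply, div_im, ← sub_div, div_mul_eq_mul_div, hnum]
  exact div_neg_of_neg_of_pos (div_neg_of_neg_of_pos
    (mul_neg_of_pos_of_neg (by nlinarith) hcubic) (by norm_num)) hd

lemma eqOn_extremal_of_apply_eq {g : ℂ → ℂ} (hg : ClassR g) (hx : (x : ℂ) ∈ uDisc) {z₀ : ℂ}
    (hz₀ : z₀ ∈ uDisc) (him : z₀.im ≠ 0) (hgz₀ : g z₀ = extremal x z₀) :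
    EqOn g (extremal x) uDisc := by
  obtain ⟨hd, hm, h0, hreal⟩ := hg
  have hz₀0 : z₀ ≠ 0 := by rintro rfl; exact him zero_im
  have hlt : ‖g z₀‖ < ‖z₀‖ := by
    rw [hgz₀, extremal, norm_mul]
    exact mul_lt_of_lt_one_right (norm_pos_iff.2 hz₀0) (discInvolution_mem hx hz₀)
  have hφ := mapsTo_dslope_zero_of_norm_lt hd hm h0 hz₀ hlt
  have hφd : DifferentiableOn ℂ (dslope g 0) uDisc := by
    rw [uDisc_eq_ball] at hd ⊢
    exact (differentiableOn_dslope (isOpen_ball.mem_nhds (mem_ball_self one_pos))).2 hd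
  have hφz₀ : dslope g 0 z₀ = discInvolution x z₀ := by
    rw [dslope_zero_eq_div h0 hz₀0, hgz₀, extremal, mul_div_cancel_left₀ _ hz₀0]
  have hφz₀' : dslope g 0 (conj z₀) = discInvolution x (conj z₀) := by
    rw [dslope_zero_eq_div h0 ((map_ne_zero _).2 hz₀0), hreal z₀ hz₀, ← map_div₀,
      ← dslope_zero_eq_div h0 hz₀0, hφz₀, discInvolution_ofReal_conj]
  have hfix : EqOn (discInvolution x ∘ dslope g 0) id uDisc :=
    eqOn_id_of_isFixedPt_of_isFixedPt ((differentiableOn_discInvolution hx).comp hφd hφ)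
      ((mapsTo_discInvolution hx).comp hφ) hz₀ (conj_mem_uDisc hz₀)
      (fun h ↦ him (conj_eq_iff_im.1 h.symm))
      (by simp [IsFixedPt, hφz₀, discInvolution_discInvolution hx hz₀])
      (by simp [IsFixedPt, hφz₀', discInvolution_discInvolution hx (conj_mem_uDisc hz₀)])
  intro z hz
  have hφz : dslope g 0 z = discInvolution x z := by
    rw [← discInvolution_discInvolution hx (hφ hz)]
    exact congrArg (discInvolution x) (hfix hz)
  simpa [h0, hφz, extremal] using (sub_smul_dslope g 0 z).symm

lemma extremal_apply_notMem_VT (hx : (x : ℂ) ∈ uDisc) {z₀ : ℂ} (hz₀ : z₀ ∈ uDisc)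
    (him : z₀.im ≠ 0) : extremal x z₀ ∉ VT z₀ := by
  rintro ⟨g, hg, hgz₀⟩
  obtain ⟨z, hz, hneg⟩ := exists_im_extremal_mul_im_neg hx
  have hgz := eqOn_extremal_of_apply_eq hg.classRge.1 hx hz₀ him hgz₀ hz
  exact hneg.not_ge (hgz ▸ hg.2.2.2.2.2 z hz)

end extremal

theorem valueRange_ClassT_ssubset_ClassRge (z0 : ℂ) (hz0 : z0 ∈ uDisc) (him : z0.im ≠ 0)
    (x : ℝ) (hx1 : 0 < x) (hx2 : x < 1) :
    z0 * (z0 - (x:ℂ)) / ((x:ℂ)*z0 - 1) ∈ VRge z0 ∧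
    z0 * (z0 - (x:ℂ)) / ((x:ℂ)*z0 - 1) ∉ VT z0 ∧
    VT z0 ⊂ VRge z0 := by
  have hx : (x : ℂ) ∈ uDisc := ofReal_mem_uDisc_iff.2 (abs_lt.2 ⟨by linarith, hx2⟩)
  rw [← extremal_apply]
  have hmem : extremal x z0 ∈ VRge z0 := ⟨extremal x, extremal_classRge hx hx1.le, rfl⟩
  have hnot : extremal x z0 ∉ VT z0 := extremal_apply_notMem_VT hx hz0 him
  have hsub : VT z0 ⊆ VRge z0 := fun _ ⟨f, hf, hfw⟩ ↦ ⟨f, hf.classRge, hfw⟩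
  exact ⟨hmem, hnot, hsub, fun h ↦ hnot (h hmem)⟩
end
end

section
/- Let z0 lie in the upper half-plane H. Then V_𝓗(z0) = {f(z0) : f ∈ 𝓗} equals {w ∈ H : Im(w) > Im(z0)} ∪ {z0}; in particular, every f ∈ 𝓗 satisfies Im(f(z0)) ≥ Im(z0), with equality if and only if f is the identity. -/
open Complex Set Filter Topology

noncomputable section

/-- The upper half-plane. -/
def UHP : Set ℂ := {z : ℂ | 0 < z.im}

/-- Hydrodynamic normalization at infinity: there is `c ≥ 0` (the half-plane capacity)
such that `z * (f z - z) → -c` as `|z| → ∞` within each sector `{Im z ≥ ε * |z|}`. -/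
def HydroNorm (f : ℂ → ℂ) : Prop :=
  ∃ c : ℝ, 0 ≤ c ∧ ∀ ε : ℝ, 0 < ε →
    Tendsto (fun z : ℂ => z * (f z - z))
      (comap (fun z : ℂ => ‖z‖) atTop ⊓ 𝓟 {z : ℂ | ε * ‖z‖ ≤ z.im})
      (𝓝 (-(c : ℂ)))

/-- The class `𝓗` of univalent self-maps of the upper half-plane with
hydrodynamic normalization. -/
def ClassH (f : ℂ → ℂ) : Prop :=
  DifferentiableOn ℂ f UHP ∧ InjOn f UHP ∧ MapsTo f UHP UHP ∧ HydroNorm f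


/-- The value range `V_𝓗(z0)`. -/
def VH (z0 : ℂ) : Set ℂ := {w : ℂ | ∃ f : ℂ → ℂ, ClassH f ∧ f z0 = w}

/-!
Schwarz–Pick between `z` and `I * y`, divided by `y ^ 3`, gives `Im z ≤ Im f(z)` in the limit
`y → ∞`, because the hydrodynamic normalization forces `f (I * y) = I * y + o(1)`. So `f - id`
has nonnegative imaginary part; if it vanishes at `z0`, the open mapping theorem makes `f - id`
constant, and the normalization makes the constant `0`. Conversely, every `w` above `z0` is the
image of `z0` under a vertical slit map `z ↦ r + I √(h ^ 2 - (z - r) ^ 2)`, with foot `r` and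
height `h` solved for from the equation `f z0 = w`.
-/
open ComplexConjugate Metric

@[simp] lemma mem_UHP {z : ℂ} : z ∈ UHP ↔ 0 < z.im := Iff.rfl

lemma isOpen_UHP : IsOpen UHP := isOpen_lt continuous_const continuous_im

lemma normSq_sub_conj (u q : ℂ) :
    normSq (u - conj q) = normSq (u - q) + 4 * u.im * q.im := by
  simp only [normSq_apply, sub_re, sub_im, conj_re, conj_im]
  ring

lemma norm_sub_lt_norm_sub_conj {u q : ℂ} (hu : 0 < u.im) (hq : 0 < q.im) :
    ‖u - q‖ < ‖u - conj q‖ := by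
  rw [← sq_lt_sq₀ (norm_nonneg _) (norm_nonneg _), Complex.sq_norm, Complex.sq_norm,
    normSq_sub_conj]
  nlinarith [mul_pos hu hq]

def cayleyAt (a z : ℂ) : ℂ := (z - a) / (z - conj a)

def cayleyAtInv (a ζ : ℂ) : ℂ := (a - conj a * ζ) / (1 - ζ)

section Cayley

variable {a z : ℂ}

lemma cayleyAt_self (a : ℂ) : cayleyAt a a = 0 := by simp [cayleyAt]

lemma norm_cayleyAt_lt_one (ha : 0 < a.im) (hz : 0 < z.im) : ‖cayleyAt a z‖ < 1 := by
  rw [cayleyAt, norm_div, div_lt_one ((norm_nonneg _).trans_lt (norm_sub_lt_norm_sub_conj hz ha))]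
  exact norm_sub_lt_norm_sub_conj hz ha

lemma normSq_cayleyAt (a z : ℂ) :
    normSq (cayleyAt a z) = normSq (z - a) / (normSq (z - a) + 4 * z.im * a.im) := by
  rw [cayleyAt, normSq_div, normSq_sub_conj]

lemma im_cayleyAtInv (a ζ : ℂ) :
    (cayleyAtInv a ζ).im = a.im * (1 - normSq ζ) / normSq (1 - ζ) := by
  rw [cayleyAtInv, div_im, div_sub_div_same]
  congr 1
  simp only [normSq_apply, sub_re, sub_im, mul_re, mul_im, conj_re, conj_im, one_re, one_im]
  ring

lemma one_sub_ne_zero_of_mem_ball {ζ : ℂ} (hζ : ζ ∈ ball (0 : ℂ) 1) : 1 - ζ ≠ 0 := by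
  rintro h
  rw [← eq_of_sub_eq_zero h, mem_ball_zero_iff, norm_one] at hζ
  exact lt_irrefl _ hζ

lemma cayleyAtInv_mapsTo (ha : 0 < a.im) : MapsTo (cayleyAtInv a) (ball 0 1) UHP := by
  intro ζ hζ
  have hζ1 : normSq ζ < 1 := by
    rw [← Complex.sq_norm]
    nlinarith [mem_ball_zero_iff.mp hζ, norm_nonneg ζ]
  show 0 < (cayleyAtInv a ζ).im
  rw [im_cayleyAtInv]
  exact div_pos (mul_pos ha (by linarith)) (normSq_pos.mpr (one_sub_ne_zero_of_mem_ball hζ))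

lemma differentiableOn_cayleyAtInv (a : ℂ) : DifferentiableOn ℂ (cayleyAtInv a) (ball 0 1) :=
  DifferentiableOn.div (by fun_prop) (by fun_prop) fun _ hζ => one_sub_ne_zero_of_mem_ball hζ

lemma cayleyAtInv_zero (a : ℂ) : cayleyAtInv a 0 = a := by simp [cayleyAtInv]

lemma cayleyAtInv_cayleyAt (ha : 0 < a.im) (hz : 0 < z.im) :
    cayleyAtInv a (cayleyAt a z) = z := by
  have hz' : z - conj a ≠ 0 :=
    norm_pos_iff.mp ((norm_nonneg _).trans_lt (norm_sub_lt_norm_sub_conj hz ha))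
  have ha' : a - conj a ≠ 0 := by simp [sub_conj, ha.ne']
  have hnum : a - conj a * cayleyAt a z = z * (a - conj a) / (z - conj a) := by
    rw [cayleyAt]; field_simp; ring
  have hden : 1 - cayleyAt a z = (a - conj a) / (z - conj a) := by
    rw [cayleyAt]; field_simp; ring
  rw [cayleyAtInv, hnum, hden]
  field_simp

end Cayley

section SchwarzPick

variable {f : ℂ → ℂ} {a z : ℂ}

lemma norm_cayleyAt_map_le (hd : DifferentiableOn ℂ f UHP) (hm : MapsTo f UHP UHP)
    (ha : a ∈ UHP) (hz : z ∈ UHP) : ‖cayleyAt (f a) (f z)‖ ≤ ‖cayleyAt a z‖ := by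
  set g := fun ζ => cayleyAt (f a) (f (cayleyAtInv a ζ))
  have hinv := cayleyAtInv_mapsTo (a := a) ha
  have hg_diff : DifferentiableOn ℂ g (ball 0 1) := by
    refine DifferentiableOn.div ?_ ?_ fun ζ hζ => ?_
    · exact (hd.comp (differentiableOn_cayleyAtInv a) hinv).sub_const _
    · exact (hd.comp (differentiableOn_cayleyAtInv a) hinv).sub_const _
    · exact norm_pos_iff.mp ((norm_nonneg _).trans_lt
        (norm_sub_lt_norm_sub_conj (hm (hinv hζ)) (hm ha)))
  have hg_maps : MapsTo g (ball 0 1) (closedBall 0 1) := fun ζ hζ =>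
    ball_subset_closedBall (mem_ball_zero_iff.mpr (norm_cayleyAt_lt_one (hm ha) (hm (hinv hζ))))
  have hg0 : g 0 = 0 := by simp only [g, cayleyAtInv_zero, cayleyAt_self]
  simpa only [g, cayleyAtInv_cayleyAt ha hz] using
    Complex.norm_le_norm_of_mapsTo_ball hg_diff hg_maps hg0 (norm_cayleyAt_lt_one ha hz)

lemma schwarz_pick (hd : DifferentiableOn ℂ f UHP) (hm : MapsTo f UHP UHP)
    (hz : z ∈ UHP) (ha : a ∈ UHP) :
    z.im * a.im * normSq (f z - f a) ≤ (f z).im * (f a).im * normSq (z - a) := by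
  have hf_pos : 0 < normSq (f z - f a) + 4 * (f z).im * (f a).im := by
    nlinarith [normSq_nonneg (f z - f a), mul_pos (mem_UHP.mp (hm hz)) (mem_UHP.mp (hm ha))]
  have hpos : 0 < normSq (z - a) + 4 * z.im * a.im := by
    nlinarith [normSq_nonneg (z - a), mul_pos (mem_UHP.mp hz) (mem_UHP.mp ha)]
  have h := norm_cayleyAt_map_le hd hm ha hz
  rw [← sq_le_sq₀ (norm_nonneg _) (norm_nonneg _), Complex.sq_norm, Complex.sq_norm,
    normSq_cayleyAt, normSq_cayleyAt, div_le_div_iff₀ hf_pos hpos] at h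
  nlinarith

end SchwarzPick

lemma I_mul_ofReal_mem_UHP {y : ℝ} (hy : 0 < y) : I * y ∈ UHP := by
  simpa using hy

lemma tendsto_I_mul_ofReal_atTop :
    Tendsto (fun y : ℝ => I * y) atTop
      (comap (fun z : ℂ => ‖z‖) atTop ⊓ 𝓟 {z : ℂ | 1 * ‖z‖ ≤ z.im}) := by
  have hnorm : ∀ᶠ y : ℝ in atTop, ‖I * y‖ = y := by
    filter_upwards [eventually_ge_atTop 0] with y hy
    simp [abs_of_nonneg hy]
  refine tendsto_inf.mpr
    ⟨tendsto_comap_iff.mpr (tendsto_id.congr' ?_), tendsto_principal.mpr ?_⟩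
  · filter_upwards [hnorm] with y hy using hy.symm
  · filter_upwards [hnorm] with y hy
    show 1 * ‖I * (y : ℂ)‖ ≤ (I * (y : ℂ)).im
    simp only [hy, one_mul, I_mul_im, ofReal_re, le_refl]

lemma HydroNorm.tendsto_sub_I_mul {f : ℂ → ℂ} (hf : HydroNorm f) :
    Tendsto (fun y : ℝ => f (I * y) - I * y) atTop (𝓝 0) := by
  obtain ⟨c, -, hc⟩ := hf
  have hinv : Tendsto (fun y : ℝ => (I * y)⁻¹) atTop (𝓝 0) := by
    simpa [mul_comm] using (tendsto_inv_atTop_zero.ofReal).const_mul I⁻¹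
  have := ((hc 1 one_pos).comp tendsto_I_mul_ofReal_atTop).mul hinv
  rw [mul_zero] at this
  refine this.congr' ?_
  filter_upwards [eventually_gt_atTop 0] with y hy
  have : I * (y : ℂ) ≠ 0 := by simp [hy.ne']
  rw [Function.comp_apply, mul_comm, ← mul_assoc, inv_mul_cancel₀ this, one_mul]

lemma HydroNorm.tendsto_div_ofReal {f : ℂ → ℂ} (hf : HydroNorm f) :
    Tendsto (fun y : ℝ => f (I * y) / y) atTop (𝓝 I) := by
  have := (hf.tendsto_sub_I_mul.mul tendsto_inv_atTop_zero.ofReal).add_const I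
  rw [zero_mul, zero_add] at this
  refine this.congr' ?_
  filter_upwards [eventually_gt_atTop 0] with y hy
  have : (y : ℂ) ≠ 0 := ofReal_ne_zero.mpr hy.ne'
  push_cast
  field_simp
  ring

lemma im_le_im_of_hydroNorm {f : ℂ → ℂ} (hd : DifferentiableOn ℂ f UHP)
    (hm : MapsTo f UHP UHP) (hf : HydroNorm f) {z : ℂ} (hz : z ∈ UHP) : z.im ≤ (f z).im := by
  set g := fun y : ℝ => f (I * y) / y
  have hg : Tendsto g atTop (𝓝 I) := hf.tendsto_div_ofReal
  have hdiv : ∀ c : ℂ, Tendsto (fun y : ℝ => c / y) atTop (𝓝 0) := fun c => by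
    simpa [div_eq_mul_inv] using (tendsto_inv_atTop_zero.ofReal).const_mul c
  have hlhs : Tendsto (fun y => z.im * normSq (f z / y - g y)) atTop (𝓝 z.im) := by
    simpa using ((continuous_normSq.tendsto _).comp ((hdiv (f z)).sub hg)).const_mul z.im
  have hrhs : Tendsto (fun y => (f z).im * (g y).im * normSq (z / y - I)) atTop
      (𝓝 (f z).im) := by
    simpa using ((((continuous_im.tendsto _).comp hg).const_mul (f z).im).mul
      ((continuous_normSq.tendsto _).comp ((hdiv z).sub_const I)))
  refine le_of_tendsto_of_tendsto hlhs hrhs ?_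
  filter_upwards [eventually_gt_atTop 0] with y hy
  have hy0 : y ≠ 0 := hy.ne'
  have hy' : (y : ℂ) ≠ 0 := ofReal_ne_zero.mpr hy0
  have hsp := schwarz_pick hd hm hz (I_mul_ofReal_mem_UHP hy)
  have e1 : f z / y - g y = (f z - f (I * y)) / y := by simp only [g]; ring
  have e2 : z / y - I = (z - I * y) / y := by field_simp
  rw [e1, e2, normSq_div, normSq_div, normSq_ofReal, div_ofReal_im]
  simp only [I_mul_im, ofReal_re] at hsp
  calc z.im * (normSq (f z - f (I * y)) / (y * y))
      = z.im * y * normSq (f z - f (I * y)) / y ^ 3 := by field_simp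
    _ ≤ (f z).im * (f (I * y)).im * normSq (z - I * y) / y ^ 3 := by gcongr
    _ = (f z).im * ((f (I * y)).im / y) * (normSq (z - I * y) / (y * y)) := by field_simp

lemma Complex.eqOn_of_isPreconnected_of_isMinOn_im {g : ℂ → ℂ} {U : Set ℂ} {z₀ : ℂ}
    (hU : IsPreconnected U) (hUo : IsOpen U) (hd : DifferentiableOn ℂ g U) (hz₀ : z₀ ∈ U)
    (hmin : IsMinOn (fun z => (g z).im) U z₀) : EqOn g (fun _ => g z₀) U := by
  rcases (hd.analyticOnNhd hUo).is_constant_or_isOpen hU with ⟨w, hw⟩ | hopen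
  · intro z hz
    simp only [hw z hz, hw z₀ hz₀]
  · obtain ⟨ε, hε, hball⟩ :=
      Metric.isOpen_iff.mp (hopen U subset_rfl hUo) (g z₀) ⟨z₀, hz₀, rfl⟩
    have hmem : g z₀ - (ε / 2 : ℝ) * I ∈ ball (g z₀) ε := by
      simp [abs_of_pos hε, hε]
    obtain ⟨z, hz, hgz⟩ := hball hmem
    have := hmin hz
    simp only [mem_ofPred_eq, hgz, sub_im, mul_im, ofReal_re, I_im, ofReal_im, I_re] at this
    linarith

lemma eqOn_id_of_im_eq {f : ℂ → ℂ} (hd : DifferentiableOn ℂ f UHP) (hm : MapsTo f UHP UHP)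
    (hf : HydroNorm f) {z₀ : ℂ} (hz₀ : z₀ ∈ UHP) (heq : (f z₀).im = z₀.im) :
    EqOn f id UHP := by
  set F := fun z => f z - z
  have hmin : IsMinOn (fun z => (F z).im) UHP z₀ := fun z hz => by
    simp only [mem_ofPred_eq, F, sub_im, heq, sub_self, sub_nonneg]
    exact im_le_im_of_hydroNorm hd hm hf hz
  have hconst := Complex.eqOn_of_isPreconnected_of_isMinOn_im
    (convex_halfSpace_im_gt 0).isPreconnected isOpen_UHP (hd.sub differentiableOn_id) hz₀ hmin
  have hF0 : F z₀ = 0 := by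
    refine tendsto_nhds_unique (hf.tendsto_sub_I_mul.congr' ?_) tendsto_const_nhds |>.symm
    filter_upwards [eventually_gt_atTop 0] with y hy
    exact hconst (I_mul_ofReal_mem_UHP hy)
  intro z hz
  simpa [F, hF0, sub_eq_zero] using hconst hz

namespace Complex

lemma sq_sqrt (z : ℂ) : sqrt z ^ 2 = z := by
  rw [sqrt]
  exact_mod_cast cpow_nat_inv_pow z two_ne_zero

lemma re_sqrt_nonneg (z : ℂ) : 0 ≤ (sqrt z).re := by
  rw [sqrt, cpow_inv_two_re]
  exact Real.sqrt_nonneg _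

lemma re_sqrt_pos {z : ℂ} (hz : z ∈ slitPlane) : 0 < (sqrt z).re := by
  rw [sqrt, cpow_inv_two_re, Real.sqrt_pos]
  rcases mem_slitPlane_iff.mp hz with hre | him
  · linarith [norm_nonneg z]
  · linarith [neg_abs_le z.re, abs_re_lt_norm.mpr him]

lemma sqrt_eq_of_sq_eq {z v : ℂ} (hv : v ^ 2 = z) (hre : 0 < v.re) : sqrt z = v := by
  have h : (sqrt z - v) * (sqrt z + v) = 0 := by linear_combination sq_sqrt z - hv
  rcases mul_eq_zero.mp h with h | h
  · exact sub_eq_zero.mp h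
  · have := congrArg re h
    simp only [add_re, zero_re] at this
    linarith [re_sqrt_nonneg z]

lemma ofReal_sub_sq_mem_slitPlane {c : ℝ} (hc : 0 ≤ c) {u : ℂ} (hu : 0 < u.im) :
    (c : ℂ) - u ^ 2 ∈ slitPlane := by
  rw [mem_slitPlane_iff]
  rcases eq_or_ne u.re 0 with h | h
  · left
    simp only [sub_re, ofReal_re, pow_two, mul_re, h]
    nlinarith
  · right
    simp only [sub_im, ofReal_im, pow_two, mul_im]
    intro h0
    exact mul_ne_zero h hu.ne' (by linarith)

end Complex

/-- The conformal map of the upper half-plane onto the upper half-plane minus the vertical slit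
from `r` to `r + |h| i`; its half-plane capacity is `h ^ 2 / 2`. -/
def slitMap (r h : ℝ) (z : ℂ) : ℂ := r + I * Complex.sqrt (h ^ 2 - (z - r) ^ 2)

section SlitMap

variable {r h : ℝ} {z : ℂ}

lemma slitMap_radicand_mem_slitPlane (hz : z ∈ UHP) :
    (h : ℂ) ^ 2 - (z - r) ^ 2 ∈ slitPlane := by
  simpa using Complex.ofReal_sub_sq_mem_slitPlane (sq_nonneg h) (u := z - r) (by simpa using hz)

lemma im_slitMap (r h : ℝ) (z : ℂ) :
    (slitMap r h z).im = (Complex.sqrt (h ^ 2 - (z - r) ^ 2)).re := by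
  simp [slitMap]

lemma slitMap_mapsTo : MapsTo (slitMap r h) UHP UHP := fun z hz => by
  show 0 < (slitMap r h z).im
  rw [im_slitMap]
  exact Complex.re_sqrt_pos (slitMap_radicand_mem_slitPlane hz)

lemma differentiableOn_slitMap : DifferentiableOn ℂ (slitMap r h) UHP := fun z hz => by
  have : DifferentiableAt ℂ (fun z : ℂ => (h : ℂ) ^ 2 - (z - r) ^ 2) z := by fun_prop
  exact (((Complex.differentiableAt_sqrt (slitMap_radicand_mem_slitPlane hz)).comp z
    this).const_mul I).const_add _ |>.differentiableWithinAt

lemma sq_sub_sq_eq_of_slitMap_eq {z₁ z₂ : ℂ} (h₁₂ : slitMap r h z₁ = slitMap r h z₂) :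
    (z₁ - r) ^ 2 = (z₂ - r) ^ 2 := by
  have hs := mul_left_cancel₀ I_ne_zero (add_left_cancel h₁₂)
  have := congrArg (· ^ 2) hs
  simp only [Complex.sq_sqrt] at this
  linear_combination -this

lemma slitMap_injOn : InjOn (slitMap r h) UHP := fun z₁ hz₁ z₂ hz₂ h₁₂ => by
  have hsq : (z₁ - z₂) * (z₁ + z₂ - 2 * r) = 0 := by
    linear_combination sq_sub_sq_eq_of_slitMap_eq h₁₂
  rcases mul_eq_zero.mp hsq with h' | h'
  · exact sub_eq_zero.mp h'
  · have := congrArg im h'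
    simp only [sub_im, add_im, mul_im, ofReal_im, zero_im] at this
    norm_num at this
    linarith [mem_UHP.mp hz₁, mem_UHP.mp hz₂]

lemma slitMap_eq {w : ℂ} (hw : w ∈ UHP) (hrel : (h : ℂ) ^ 2 - (z - r) ^ 2 = -(w - r) ^ 2) :
    slitMap r h z = w := by
  have hsqrt : Complex.sqrt (-(w - r) ^ 2) = -I * (w - r) :=
    Complex.sqrt_eq_of_sq_eq (by linear_combination (w - r) ^ 2 * I_sq) (by simpa using hw)
  rw [slitMap, hrel, hsqrt]
  linear_combination (r - w) * I_sq

lemma slitMap_sub_mul_slitMap_add (r h : ℝ) (z : ℂ) :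
    (slitMap r h z - z) * (slitMap r h z + z - 2 * r) = -h ^ 2 := by
  simp only [slitMap]
  linear_combination Complex.sqrt ((h : ℂ) ^ 2 - (z - r) ^ 2) ^ 2 * I_sq -
    Complex.sq_sqrt ((h : ℂ) ^ 2 - (z - r) ^ 2)

lemma im_lt_im_slitMap_add (hz : z ∈ UHP) : z.im < (slitMap r h z + z - 2 * r).im := by
  have := slitMap_mapsTo (r := r) (h := h) hz
  simp only [mem_UHP] at hz this
  simp only [sub_im, add_im, mul_im, ofReal_im, re_ofNat, im_ofNat]
  linarith

lemma mul_slitMap_sub_eq (hz : z ∈ UHP) :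
    z * (slitMap r h z - z) = -((h ^ 2 / 2 : ℝ) : ℂ) -
      (r * h ^ 2 + h ^ 4 / 2 * (slitMap r h z + z - 2 * r)⁻¹) *
        (slitMap r h z + z - 2 * r)⁻¹ := by
  have hD : slitMap r h z + z - 2 * r ≠ 0 := fun h0 => by
    have := im_lt_im_slitMap_add (r := r) (h := h) hz
    rw [mem_UHP] at hz
    rw [h0, zero_im] at this
    linarith
  have hprod := slitMap_sub_mul_slitMap_add r h z
  set D := slitMap r h z + z - 2 * r
  field_simp
  push_cast
  linear_combination ((h : ℂ) ^ 2 + 2 * z * D) * hprod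

lemma hydroNorm_slitMap (r h : ℝ) : HydroNorm (slitMap r h) := by
  refine ⟨h ^ 2 / 2, by positivity, fun ε hε => ?_⟩
  set L := comap (fun z : ℂ => ‖z‖) atTop ⊓ 𝓟 {z : ℂ | ε * ‖z‖ ≤ z.im}
  set c : ℂ := ((h ^ 2 / 2 : ℝ) : ℂ)
  have hnorm : Tendsto (fun z : ℂ => ‖z‖) L atTop := tendsto_comap.mono_left inf_le_left
  have hsector : ∀ᶠ z in L, ε * ‖z‖ ≤ z.im :=
    (eventually_principal.mpr fun _ hz => hz).filter_mono inf_le_right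
  have hUHP : ∀ᶠ z in L, z ∈ UHP := by
    filter_upwards [hsector, hnorm.eventually_gt_atTop 0] with z h1 h2
    exact (mul_pos hε h2).trans_le h1
  have hDinv : Tendsto (fun z => (slitMap r h z + z - 2 * r)⁻¹) L (𝓝 0) := by
    rw [tendsto_zero_iff_norm_tendsto_zero]
    simp only [norm_inv]
    refine tendsto_inv_atTop_zero.comp (tendsto_atTop_mono' L ?_ (hnorm.const_mul_atTop hε))
    filter_upwards [hsector, hUHP] with z h1 h2
    exact h1.trans ((im_lt_im_slitMap_add h2).le.trans ((le_abs_self _).trans (abs_im_le_norm _)))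
  have hpoly := (show Continuous fun w : ℂ => -c - (r * h ^ 2 + h ^ 4 / 2 * w) * w by
    fun_prop).tendsto' 0 (-c) (by simp)
  refine (hpoly.comp hDinv).congr' ?_
  filter_upwards [hUHP] with z hz
  exact (mul_slitMap_sub_eq hz).symm

end SlitMap

lemma exists_slitMap_params {z₀ w : ℂ} (hz₀ : 0 < z₀.im) (hw : z₀.im < w.im) :
    ∃ r h : ℝ, (h : ℂ) ^ 2 - (z₀ - r) ^ 2 = -(w - r) ^ 2 := by
  have hne : w.im - z₀.im ≠ 0 := by linarith
  -- `r` makes `(z₀ - r) ^ 2 - (w - r) ^ 2` real; its real part is then `h ^ 2 ≥ 0`.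
  set r := (w.re * w.im - z₀.re * z₀.im) / (w.im - z₀.im)
  have hr : (w.re - r) * w.im = (z₀.re - r) * z₀.im := by
    simp only [r]; field_simp; ring
  have hnonneg : 0 ≤ (z₀.re - r) ^ 2 - (w.re - r) ^ 2 + w.im ^ 2 - z₀.im ^ 2 := by
    have hsq : (w.re - r) ^ 2 * w.im ^ 2 = (z₀.re - r) ^ 2 * z₀.im ^ 2 := by
      linear_combination ((w.re - r) * w.im + (z₀.re - r) * z₀.im) * hr
    have him : z₀.im ^ 2 < w.im ^ 2 := by nlinarith
    have : (w.re - r) ^ 2 ≤ (z₀.re - r) ^ 2 := by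
      by_contra! hlt
      nlinarith [mul_lt_mul_of_pos_right hlt (hz₀.trans hw |> pow_pos <| 2),
        mul_le_mul_of_nonneg_left him.le (sq_nonneg (z₀.re - r))]
    linarith
  refine ⟨r, √((z₀.re - r) ^ 2 - (w.re - r) ^ 2 + w.im ^ 2 - z₀.im ^ 2), ?_⟩
  rw [← ofReal_pow, Real.sq_sqrt hnonneg]
  apply Complex.ext
  · simp only [sub_re, neg_re, ofReal_re, pow_two, mul_re, sub_im, ofReal_im]
    ring
  · simp only [sub_im, neg_im, ofReal_re, pow_two, mul_im, sub_re, ofReal_im]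
    linear_combination 2 * hr

lemma classH_id : ClassH id :=
  ⟨differentiableOn_id, injOn_id _, mapsTo_id _, 0, le_rfl, fun _ _ => by
    simpa using tendsto_const_nhds⟩

lemma classH_slitMap (r h : ℝ) : ClassH (slitMap r h) :=
  ⟨differentiableOn_slitMap, slitMap_injOn, slitMap_mapsTo, hydroNorm_slitMap r h⟩

theorem valueRange_ClassH (z0 : ℂ) (hz0 : z0 ∈ UHP) :
    VH z0 = insert z0 {w : ℂ | w ∈ UHP ∧ z0.im < w.im} ∧
    (∀ f : ℂ → ℂ, ClassH f → z0.im ≤ (f z0).im) ∧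
    (∀ f : ℂ → ℂ, ClassH f → ((f z0).im = z0.im ↔ EqOn f id UHP)) := by
  have im_le : ∀ f : ℂ → ℂ, ClassH f → z0.im ≤ (f z0).im :=
    fun f ⟨hd, _, hm, hf⟩ => im_le_im_of_hydroNorm hd hm hf hz0
  have im_eq_iff : ∀ f : ℂ → ℂ, ClassH f → ((f z0).im = z0.im ↔ EqOn f id UHP) :=
    fun f ⟨hd, _, hm, hf⟩ => ⟨eqOn_id_of_im_eq hd hm hf hz0, fun h => by rw [h hz0, id]⟩
  refine ⟨Set.ext fun w => ⟨?_, ?_⟩, im_le, im_eq_iff⟩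
  · rintro ⟨f, hf, rfl⟩
    rcases (im_le f hf).eq_or_lt with heq | hlt
    · exact Or.inl ((im_eq_iff f hf).mp heq.symm hz0)
    · exact Or.inr ⟨hf.2.2.1 hz0, hlt⟩
  · rintro (rfl | ⟨hw, hlt⟩)
    · exact ⟨id, classH_id, rfl⟩
    · obtain ⟨r, h, hrel⟩ := exists_slitMap_params hz0 hlt
      exact ⟨slitMap r h, classH_slitMap r h, slitMap_eq hw hrel⟩
end
end
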